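/- Suppose ρ_h, ω_h, u_h, γ_h : [0,T] → V_h^k (with u_h, ρ_h, ω_h differentiable in s) satisfy, for every cell I_j and all test functions φ, ϕ, ψ, η ∈ V_h^k: ((ρ_h)_s, φ)_{I_j} + ⟨{γ_h}, φ⟩_{I_j} − (γ_h, φ_y)_{I_j} = 0; ((ω_h)_s, ϕ)_{I_j} = (ρ_h u_h, ϕ)_{I_j}; (ω_h, ψ)_{I_j} = ⟨{u_h}, ψ⟩_{I_j} − (u_h, ψ_y)_{I_j}; and (γ_h, η)_{I_j} = (½ u_h², η)_{I_j}, with periodic boundary conditions. Then the discrete quantity H_0(ρ_h, u_h) = ∫_{y_L}^{y_R} ρ_h u_h² dy is conserved: d/ds ∫_{y_L}^{y_R} ρ_h u_h² dy = 0 for all s. -/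

import Mathlib

/-! Differentiating under the integral,
`d/ds ∫ ρ_h u_h² = ∫ (ρ_h)_s u_h² + 2 ∫ ρ_h u_h (u_h)_s`.
Testing the `ρ`-equation with `γ_h` and the `γ`-equation with `(ρ_h)_s` turns the first term
into `-2 ∑_j (⟨{γ_h}, γ_h⟩ - (γ_h, (γ_h)_y))`; testing the `ω_s`-equation and the
`s`-derivative of the `ω`-equation with `(u_h)_s` turns the second into
`2 ∑_j (⟨{(u_h)_s}, (u_h)_s⟩ - ((u_h)_s, (u_h)_{sy}))`. For the central flux each such cell sum
telescopes to zero over the periodic mesh. The `s`-derivatives are admissible test functions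
because, by Lagrange interpolation at `k + 1` nodes, a pointwise limit of polynomials of degree
`≤ k` is again one. -/

open MeasureTheory Polynomial
open scoped Classical

noncomputable section

/- Mesh with `N + 1` cells: cell `j` is `I_j = [grid j.castSucc, grid j.succ]`.
A DG function in `V_h^k` is represented by the family of its polynomial restrictions
to the cells; interfaces are treated periodically (indices modulo the number of cells). -/

/-- Left endpoint of cell `j`. -/
def lep {N : ℕ} (grid : Fin (N + 2) → ℝ) (j : Fin (N + 1)) : ℝ := grid j.castSucc

/-- Right endpoint of cell `j`. -/
def rep {N : ℕ} (grid : Fin (N + 2) → ℝ) (j : Fin (N + 1)) : ℝ := grid j.succ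

/-- `∫_{I_j} f dy`. -/
def cellInt {N : ℕ} (grid : Fin (N + 2) → ℝ) (j : Fin (N + 1)) (f : ℝ → ℝ) : ℝ :=
  ∫ y in lep grid j..rep grid j, f y

/-- Trace `w⁻` at the interface `y_{j+1/2}`, from the left cell `I_j`. -/
def trM {N : ℕ} (grid : Fin (N + 2) → ℝ) (f : Fin (N + 1) → Polynomial ℝ)
    (j : Fin (N + 1)) : ℝ :=
  (f j).eval (rep grid j)

/-- Trace `w⁺` at the interface `y_{j+1/2}`, from the right cell `I_{j+1}`
(cyclically, realizing the periodic boundary conditions). -/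
def trP {N : ℕ} (grid : Fin (N + 2) → ℝ) (f : Fin (N + 1) → Polynomial ℝ)
    (j : Fin (N + 1)) : ℝ :=
  (f (j + 1)).eval (lep grid (j + 1))

/-- Average `{w} = (w⁺ + w⁻)/2` at the interface `y_{j+1/2}`. -/
def avg {N : ℕ} (grid : Fin (N + 2) → ℝ) (f : Fin (N + 1) → Polynomial ℝ)
    (j : Fin (N + 1)) : ℝ :=
  (trP grid f j + trM grid f j) / 2

/-- Boundary bracket `⟨ĥ, φ⟩_{I_j} = ĥ_{j+1/2} φ⁻_{j+1/2} - ĥ_{j-1/2} φ⁺_{j-1/2}`, where the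
interface values `ĥ` are indexed by the right interface of each cell (periodically). -/
def brk {N : ℕ} (grid : Fin (N + 2) → ℝ) (hat : Fin (N + 1) → ℝ) (φ : Polynomial ℝ)
    (j : Fin (N + 1)) : ℝ :=
  hat j * φ.eval (rep grid j) - hat (j - 1) * φ.eval (lep grid j)

open Finset

theorem exists_nodes_eval_eq_sum {F : Type*} [Field F] [CharZero F] (D : ℕ) :
    ∃ (v : Fin (D + 1) → F) (L : Fin (D + 1) → F[X]), (∀ i, (L i).natDegree ≤ D) ∧
      ∀ p : F[X], p.natDegree ≤ D → ∀ y, p.eval y = ∑ i, p.eval (v i) * (L i).eval y := by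
  set v : Fin (D + 1) → F := fun i => ((i : ℕ) : F)
  have hv : Function.Injective v := Nat.cast_injective.comp Fin.val_injective
  refine ⟨v, Lagrange.basis univ v, fun i => ?_, fun p hp y => ?_⟩
  · simp [Lagrange.natDegree_basis hv.injOn (mem_univ i)]
  · have hlt : p.degree < #(univ : Finset (Fin (D + 1))) := by
      rw [card_univ, Fintype.card_fin]
      exact (degree_le_natDegree.trans_lt (by exact_mod_cast Nat.lt_succ_of_le hp))
    conv_lhs => rw [Lagrange.eq_interpolate hv.injOn hlt]
    simp [Lagrange.interpolate_apply, eval_finsetSum]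

theorem natDegree_le_of_hasDerivAt_eval {𝕜 : Type*} [NontriviallyNormedField 𝕜] [CharZero 𝕜]
    {F : 𝕜 → 𝕜[X]} {G : 𝕜[X]} {D : ℕ} {s : 𝕜} (hF : ∀ τ, (F τ).natDegree ≤ D)
    (hd : ∀ y, HasDerivAt (fun τ => (F τ).eval y) (G.eval y) s) : G.natDegree ≤ D := by
  obtain ⟨v, L, hL, heval⟩ := exists_nodes_eval_eq_sum (F := 𝕜) D
  have hG : G = ∑ i, C (G.eval (v i)) * L i := by
    refine Polynomial.funext fun y => ?_
    have hsum : HasDerivAt (fun τ => (F τ).eval y) (∑ i, G.eval (v i) * (L i).eval y) s := by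
      rw [funext fun τ => heval _ (hF τ) y]
      exact HasDerivAt.fun_sum fun i _ => (hd (v i)).mul_const _
    simpa [eval_finsetSum] using (hd y).unique hsum
  rw [hG]
  exact natDegree_sum_le_of_forall_le _ _ fun i _ => (natDegree_C_mul_le _ _).trans (hL i)

theorem hasDerivAt_intervalIntegral_eval {F : ℝ → ℝ[X]} {G : ℝ[X]} {D : ℕ} {s : ℝ} (a b : ℝ)
    (hF : ∀ τ, (F τ).natDegree ≤ D)
    (hd : ∀ y, HasDerivAt (fun τ => (F τ).eval y) (G.eval y) s) :
    HasDerivAt (fun τ => ∫ y in a..b, (F τ).eval y) (∫ y in a..b, G.eval y) s := by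
  obtain ⟨v, L, -, heval⟩ := exists_nodes_eval_eq_sum (F := ℝ) D
  have hint : ∀ p : ℝ[X], p.natDegree ≤ D →
      ∫ y in a..b, p.eval y = ∑ i, p.eval (v i) * ∫ y in a..b, (L i).eval y := by
    intro p hp
    simp_rw [← intervalIntegral.integral_const_mul]
    rw [funext (heval p hp)]
    exact intervalIntegral.integral_finsetSum fun i _ =>
      (continuous_const.mul (L i).continuous).intervalIntegrable _ _
  rw [funext fun τ => hint _ (hF τ), hint G (natDegree_le_of_hasDerivAt_eval hF hd)]
  exact HasDerivAt.fun_sum fun i _ => (hd (v i)).mul_const _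

theorem integral_eval_mul_eval_derivative (p : ℝ[X]) (a b : ℝ) :
    ∫ y in a..b, p.eval y * p.derivative.eval y = (p.eval b ^ 2 - p.eval a ^ 2) / 2 := by
  have hderiv :
      ∀ y, HasDerivAt (fun y => p.eval y ^ 2 / 2) (p.eval y * p.derivative.eval y) y :=
    fun y => (((p.hasDerivAt y).pow 2).div_const 2).congr_deriv <| by
      simp only [Nat.cast_ofNat, Nat.add_one_sub_one, pow_one]
      ring
  rw [intervalIntegral.integral_eq_sub_of_hasDerivAt (fun y _ => hderiv y)
    ((p.continuous.mul p.derivative.continuous).intervalIntegrable _ _)]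
  ring

section CentralFlux

variable {N : ℕ} (grid : Fin (N + 2) → ℝ)

theorem eval_lep_eq_trP_sub_one (f : Fin (N + 1) → ℝ[X]) (j : Fin (N + 1)) :
    (f j).eval (lep grid j) = trP grid f (j - 1) := by
  simp [trP]

theorem sum_brk_avg_sub_cellInt_mul_derivative_eq_zero (f : Fin (N + 1) → ℝ[X]) :
    ∑ j, (brk grid (avg grid f) (f j) j
      - cellInt grid j (fun y => (f j).eval y * (f j).derivative.eval y)) = 0 := by
  -- For the central flux `{f} ⟦f⟧ = ⟦f² / 2⟧`, so both cells adjacent to an interface see the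
  -- same value `e` there and the cell terms telescope.
  set e : Fin (N + 1) → ℝ := fun j => avg grid f j * trM grid f j - trM grid f j ^ 2 / 2
  have he : ∀ j, avg grid f j * trP grid f j - trP grid f j ^ 2 / 2 = e j := fun j => by
    simp only [e, avg]
    ring
  have hcell : ∀ j, brk grid (avg grid f) (f j) j
      - cellInt grid j (fun y => (f j).eval y * (f j).derivative.eval y) = e j - e (j - 1) := by
    intro j
    rw [← he (j - 1), brk, cellInt, integral_eval_mul_eval_derivative,
      eval_lep_eq_trP_sub_one]
    simp only [e, trM, rep]
    ring
  rw [sum_congr rfl fun j _ => hcell j, sum_sub_distrib]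
  exact sub_eq_zero.mpr ((Equiv.subRight 1).sum_comp e).symm

end CentralFlux

section TimeDerivative

variable {N : ℕ} (grid : Fin (N + 2) → ℝ) {s : ℝ}

theorem hasDerivAt_avg {u : ℝ → Fin (N + 1) → ℝ[X]} {u' : Fin (N + 1) → ℝ[X]}
    (hu' : ∀ j y, HasDerivAt (fun τ => (u τ j).eval y) ((u' j).eval y) s) (j : Fin (N + 1)) :
    HasDerivAt (fun τ => avg grid (u τ) j) (avg grid u' j) s :=
  ((hu' (j + 1) _).add (hu' j _)).div_const 2

theorem hasDerivAt_brk {hat : ℝ → Fin (N + 1) → ℝ} {hat' : Fin (N + 1) → ℝ}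
    (h : ∀ i, HasDerivAt (fun τ => hat τ i) (hat' i) s) (φ : ℝ[X]) (j : Fin (N + 1)) :
    HasDerivAt (fun τ => brk grid (hat τ) φ j) (brk grid hat' φ j) s :=
  ((h j).mul_const _).sub ((h (j - 1)).mul_const _)

theorem hasDerivAt_cellInt_eval_mul {F : ℝ → ℝ[X]} {G : ℝ[X]} {D : ℕ}
    (hF : ∀ τ, (F τ).natDegree ≤ D)
    (hd : ∀ y, HasDerivAt (fun τ => (F τ).eval y) (G.eval y) s) (φ : ℝ[X]) (j : Fin (N + 1)) :
    HasDerivAt (fun τ => cellInt grid j (fun y => (F τ).eval y * φ.eval y))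
      (cellInt grid j (fun y => G.eval y * φ.eval y)) s := by
  simpa only [cellInt, eval_mul] using hasDerivAt_intervalIntegral_eval (F := fun τ => F τ * φ)
    (G := G * φ) (lep grid j) (rep grid j)
    (fun τ => natDegree_mul_le.trans (Nat.add_le_add_right (hF τ) _))
    (fun y => by simpa only [eval_mul] using (hd y).mul_const (φ.eval y))

theorem cellInt_mul_eq_brk_avg_sub_of_hasDerivAt {w u : ℝ → Fin (N + 1) → ℝ[X]}
    {w' u' : Fin (N + 1) → ℝ[X]} {D : ℕ} {φ : ℝ[X]} {j : Fin (N + 1)}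
    (hw : ∀ τ, (w τ j).natDegree ≤ D) (hu : ∀ τ, (u τ j).natDegree ≤ D)
    (hw' : ∀ y, HasDerivAt (fun τ => (w τ j).eval y) ((w' j).eval y) s)
    (hu' : ∀ i y, HasDerivAt (fun τ => (u τ i).eval y) ((u' i).eval y) s)
    (heq : ∀ τ, cellInt grid j (fun y => (w τ j).eval y * φ.eval y)
      = brk grid (avg grid (u τ)) φ j
        - cellInt grid j (fun y => (u τ j).eval y * φ.derivative.eval y)) :
    cellInt grid j (fun y => (w' j).eval y * φ.eval y)
      = brk grid (avg grid u') φ j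
        - cellInt grid j (fun y => (u' j).eval y * φ.derivative.eval y) := by
  have hrhs := (hasDerivAt_brk grid (hasDerivAt_avg grid hu') φ j).fun_sub
    (hasDerivAt_cellInt_eval_mul grid hu (hu' j) φ.derivative j)
  rw [← funext heq] at hrhs
  exact (hasDerivAt_cellInt_eval_mul grid hw hw' φ j).unique hrhs

theorem hasDerivAt_sum_cellInt_mul_sq {ρ u : ℝ → Fin (N + 1) → ℝ[X]}
    {ρ' u' : Fin (N + 1) → ℝ[X]} {D : ℕ}
    (hρ : ∀ τ j, (ρ τ j).natDegree ≤ D) (hu : ∀ τ j, (u τ j).natDegree ≤ D)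
    (hρ' : ∀ j y, HasDerivAt (fun τ => (ρ τ j).eval y) ((ρ' j).eval y) s)
    (hu' : ∀ j y, HasDerivAt (fun τ => (u τ j).eval y) ((u' j).eval y) s) :
    HasDerivAt (fun τ => ∑ j, cellInt grid j (fun y => (ρ τ j).eval y * (u τ j).eval y ^ 2))
      (∑ j, (cellInt grid j (fun y => (ρ' j).eval y * (u s j).eval y ^ 2)
        + 2 * cellInt grid j (fun y => (ρ s j).eval y * (u s j).eval y * (u' j).eval y))) s := by
  refine HasDerivAt.fun_sum fun j _ => ?_
  have hdeg : ∀ τ, (ρ τ j * u τ j ^ 2).natDegree ≤ D + 2 * D := fun τ =>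
    natDegree_mul_le.trans (add_le_add (hρ τ j) (natDegree_pow_le_of_le 2 (hu τ j)))
  have hd := hasDerivAt_intervalIntegral_eval (lep grid j) (rep grid j) hdeg
    (G := ρ' j * u s j ^ 2 + C 2 * (ρ s j * u s j * u' j)) fun y => by
      simp only [eval_mul, eval_pow, eval_add, eval_C]
      refine ((hρ' j y).mul ((hu' j y).fun_pow 2)).congr_deriv ?_
      simp only [Nat.cast_ofNat, Nat.add_one_sub_one, pow_one]
      ring
  simp only [eval_add, eval_mul, eval_pow, eval_C] at hd
  rw [intervalIntegral.integral_add, intervalIntegral.integral_const_mul] at hd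
  · simpa only [cellInt, mul_assoc] using hd
  all_goals exact Continuous.intervalIntegrable (by fun_prop) _ _

end TimeDerivative

theorem cellInt_mul_sq_eq_two_mul_cellInt {N : ℕ} {grid : Fin (N + 2) → ℝ} {j : Fin (N + 1)}
    {f g q : ℝ → ℝ}
    (h : cellInt grid j (fun y => g y * f y) = cellInt grid j (fun y => q y ^ 2 / 2 * f y)) :
    cellInt grid j (fun y => f y * q y ^ 2) = 2 * cellInt grid j (fun y => f y * g y) := calc
  _ = 2 * cellInt grid j (fun y => q y ^ 2 / 2 * f y) := by
    simp only [cellInt, ← intervalIntegral.integral_const_mul]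
    congr 1
    ext y
    ring
  _ = 2 * cellInt grid j (fun y => f y * g y) := by simp only [← h, mul_comm (g _)]

theorem CD_DG_H0_conserved_general
    (N k : ℕ) (grid : Fin (N + 2) → ℝ)
    (ρ w u γ ρ' w' u' : ℝ → Fin (N + 1) → Polynomial ℝ)
    (hdeg : ∀ s j, (ρ s j).natDegree ≤ k ∧ (w s j).natDegree ≤ k ∧
      (u s j).natDegree ≤ k ∧ (γ s j).natDegree ≤ k)
    (hρ' : ∀ (s : ℝ) (j : Fin (N + 1)) (y : ℝ),
      HasDerivAt (fun τ => (ρ τ j).eval y) ((ρ' s j).eval y) s)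
    (hw' : ∀ (s : ℝ) (j : Fin (N + 1)) (y : ℝ),
      HasDerivAt (fun τ => (w τ j).eval y) ((w' s j).eval y) s)
    (hu' : ∀ (s : ℝ) (j : Fin (N + 1)) (y : ℝ),
      HasDerivAt (fun τ => (u τ j).eval y) ((u' s j).eval y) s)
    (scheme1 : ∀ (s : ℝ) (j : Fin (N + 1)) (φ : Polynomial ℝ), φ.natDegree ≤ k →
      cellInt grid j (fun y => (ρ' s j).eval y * φ.eval y)
        + brk grid (avg grid (γ s)) φ j
        - cellInt grid j (fun y => (γ s j).eval y * φ.derivative.eval y) = 0)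
    (scheme2 : ∀ (s : ℝ) (j : Fin (N + 1)) (φ : Polynomial ℝ), φ.natDegree ≤ k →
      cellInt grid j (fun y => (w' s j).eval y * φ.eval y)
        = cellInt grid j (fun y => (ρ s j).eval y * (u s j).eval y * φ.eval y))
    (scheme3 : ∀ (s : ℝ) (j : Fin (N + 1)) (ψ : Polynomial ℝ), ψ.natDegree ≤ k →
      cellInt grid j (fun y => (w s j).eval y * ψ.eval y)
        = brk grid (avg grid (u s)) ψ j
          - cellInt grid j (fun y => (u s j).eval y * ψ.derivative.eval y))
    (scheme4 : ∀ (s : ℝ) (j : Fin (N + 1)) (η : Polynomial ℝ), η.natDegree ≤ k →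
      cellInt grid j (fun y => (γ s j).eval y * η.eval y)
        = cellInt grid j (fun y => ((u s j).eval y) ^ 2 / 2 * η.eval y))
    (s : ℝ) :
    HasDerivAt
      (fun τ => ∑ j, cellInt grid j (fun y => (ρ τ j).eval y * ((u τ j).eval y) ^ 2)) 0 s := by
  have hdρ' : ∀ j, (ρ' s j).natDegree ≤ k := fun j =>
    natDegree_le_of_hasDerivAt_eval (fun τ => (hdeg τ j).1) (hρ' s j)
  have hdu' : ∀ j, (u' s j).natDegree ≤ k := fun j =>
    natDegree_le_of_hasDerivAt_eval (fun τ => (hdeg τ j).2.2.1) (hu' s j)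
  have hρ_term : ∀ j, cellInt grid j (fun y => (ρ' s j).eval y * (u s j).eval y ^ 2)
      = -2 * (brk grid (avg grid (γ s)) (γ s j) j
        - cellInt grid j (fun y => (γ s j).eval y * (γ s j).derivative.eval y)) := fun j => by
    linarith [scheme1 s j (γ s j) (hdeg s j).2.2.2,
      cellInt_mul_sq_eq_two_mul_cellInt (scheme4 s j (ρ' s j) (hdρ' j))]
  have hu_term : ∀ j,
      cellInt grid j (fun y => (ρ s j).eval y * (u s j).eval y * (u' s j).eval y)
        = brk grid (avg grid (u' s)) (u' s j) j
          - cellInt grid j (fun y => (u' s j).eval y * (u' s j).derivative.eval y) := fun j =>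
    (scheme2 s j (u' s j) (hdu' j)).symm.trans <|
      cellInt_mul_eq_brk_avg_sub_of_hasDerivAt grid (fun τ => (hdeg τ j).2.1)
        (fun τ => (hdeg τ j).2.2.1) (hw' s j) (hu' s) fun τ => scheme3 τ j _ (hdu' j)
  have hH₀ := hasDerivAt_sum_cellInt_mul_sq grid (fun τ j => (hdeg τ j).1)
    (fun τ j => (hdeg τ j).2.2.1) (hρ' s) (hu' s)
  simpa only [hρ_term, hu_term, sum_add_distrib, ← mul_sum,
    sum_brk_avg_sub_cellInt_mul_derivative_eq_zero, mul_zero, add_zero] using hH₀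

/-- **`H₀`-conservation of the semi-discrete DG scheme for the coupled dispersionless system
`ρ_s + (u²/2)_y = 0`, `u_{ys} = ρu`** (written as `ρ_s + γ_y = 0`, `ω_s = ρu`, `ω = u_y`,
`γ = u²/2`), with the central fluxes `γ̂ = {γ}`, `û = {u}` and periodic boundary conditions.
The discrete quantity `H₀(ρ_h, u_h) = ∫_I ρ_h u_h² dy` satisfies `d/ds H₀ = 0` for all `s`. -/
theorem CD_DG_H0_conserved
    (N k : ℕ) (grid : Fin (N + 2) → ℝ) (hgrid : StrictMono grid)
    (ρ w u γ ρ' w' u' : ℝ → Fin (N + 1) → Polynomial ℝ)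
    (hdeg : ∀ s j, (ρ s j).natDegree ≤ k ∧ (w s j).natDegree ≤ k ∧
      (u s j).natDegree ≤ k ∧ (γ s j).natDegree ≤ k)
    (hρ' : ∀ (s : ℝ) (j : Fin (N + 1)) (y : ℝ),
      HasDerivAt (fun τ => (ρ τ j).eval y) ((ρ' s j).eval y) s)
    (hw' : ∀ (s : ℝ) (j : Fin (N + 1)) (y : ℝ),
      HasDerivAt (fun τ => (w τ j).eval y) ((w' s j).eval y) s)
    (hu' : ∀ (s : ℝ) (j : Fin (N + 1)) (y : ℝ),
      HasDerivAt (fun τ => (u τ j).eval y) ((u' s j).eval y) s)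
    (scheme1 : ∀ (s : ℝ) (j : Fin (N + 1)) (φ : Polynomial ℝ), φ.natDegree ≤ k →
      cellInt grid j (fun y => (ρ' s j).eval y * φ.eval y)
        + brk grid (avg grid (γ s)) φ j
        - cellInt grid j (fun y => (γ s j).eval y * φ.derivative.eval y) = 0)
    (scheme2 : ∀ (s : ℝ) (j : Fin (N + 1)) (φ : Polynomial ℝ), φ.natDegree ≤ k →
      cellInt grid j (fun y => (w' s j).eval y * φ.eval y)
        = cellInt grid j (fun y => (ρ s j).eval y * (u s j).eval y * φ.eval y))
    (scheme3 : ∀ (s : ℝ) (j : Fin (N + 1)) (ψ : Polynomial ℝ), ψ.natDegree ≤ k →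
      cellInt grid j (fun y => (w s j).eval y * ψ.eval y)
        = brk grid (avg grid (u s)) ψ j
          - cellInt grid j (fun y => (u s j).eval y * ψ.derivative.eval y))
    (scheme4 : ∀ (s : ℝ) (j : Fin (N + 1)) (η : Polynomial ℝ), η.natDegree ≤ k →
      cellInt grid j (fun y => (γ s j).eval y * η.eval y)
        = cellInt grid j (fun y => ((u s j).eval y) ^ 2 / 2 * η.eval y))
    (s : ℝ) :
    HasDerivAt
      (fun τ => ∑ j, cellInt grid j (fun y => (ρ τ j).eval y * ((u τ j).eval y) ^ 2)) 0 s :=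
  CD_DG_H0_conserved_general N k grid ρ w u γ ρ' w' u' hdeg hρ' hw' hu' scheme1 scheme2 scheme3
    scheme4 s
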